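/- arXiv:1710.07969 — 4 statements merged into one kernel-verified Lean document; each statement's English description precedes it below -/
import Mathlib

section
/- The equation x² + y² + t⁴ = 22 has no solutions with x, y, t in ℤ[1/2] (i.e., rationals whose denominators are powers of 2). -/
/-!
Clearing the denominators of a solution in `ℤ[1/2]` gives integers with
`X² + Y² + T⁴ = 22 · 16ⁿ`. Squares and fourth powers are `0` or `1` mod `4`, so if `16` divides
`X² + Y² + T⁴` then `X`, `Y`, `T` are even, and after dividing out `T = 2t` the same argument
makes `X / 2`, `Y / 2` even: this descends from `16 N` to `N`. It remains to rule out
`X² + Y² + T⁴ = 22`, a finite search.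
-/

theorem Int.even_of_four_dvd_sq_add_sq_add_sq {a b c : ℤ} (h : 4 ∣ a ^ 2 + b ^ 2 + c ^ 2) :
    Even a ∧ Even b ∧ Even c := by
  have sq_emod_four (z : ℤ) : z % 2 = 0 ∧ z ^ 2 % 4 = 0 ∨ z % 2 = 1 ∧ z ^ 2 % 4 = 1 := by
    rcases Int.even_or_odd' z with ⟨k, rfl | rfl⟩
    · left; constructor <;> ring_nf <;> omega
    · right; constructor <;> ring_nf <;> omega
  simp only [Int.even_iff]
  rcases sq_emod_four a with ha | ha <;> rcases sq_emod_four b with hb | hb <;>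
    rcases sq_emod_four c with hc | hc <;> omega

theorem Int.exists_sq_add_sq_add_pow_four_eq_of_eq_sixteen_mul {X Y T N : ℤ}
    (h : X ^ 2 + Y ^ 2 + T ^ 4 = 16 * N) : ∃ x y t : ℤ, x ^ 2 + y ^ 2 + t ^ 4 = N := by
  obtain ⟨⟨X, rfl⟩, ⟨Y, rfl⟩, hT⟩ :=
    Int.even_of_four_dvd_sq_add_sq_add_sq (a := X) (b := Y) (c := T ^ 2)
      ⟨4 * N, by linear_combination h⟩
  obtain ⟨t, rfl⟩ := (Int.even_pow' two_ne_zero).mp hT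
  obtain ⟨⟨x, rfl⟩, ⟨y, rfl⟩, -⟩ :=
    Int.even_of_four_dvd_sq_add_sq_add_sq (a := X) (b := Y) (c := 2 * t ^ 2)
      ⟨N, mul_left_cancel₀ four_ne_zero (by linear_combination h)⟩
  exact ⟨x, y, t, mul_left_cancel₀ (by norm_num : (16 : ℤ) ≠ 0) (by linear_combination h)⟩

theorem Int.sq_add_sq_add_pow_four_ne_twentytwo (X Y T : ℤ) : X ^ 2 + Y ^ 2 + T ^ 4 ≠ 22 := by
  intro h
  have hX : -4 ≤ X ∧ X ≤ 4 := by
    constructor <;> nlinarith [sq_nonneg Y, sq_nonneg (T ^ 2)]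
  have hY : -4 ≤ Y ∧ Y ≤ 4 := by
    constructor <;> nlinarith [sq_nonneg X, sq_nonneg (T ^ 2)]
  have hT : -2 ≤ T ∧ T ≤ 2 := by
    constructor <;> nlinarith [sq_nonneg X, sq_nonneg Y, sq_nonneg (T ^ 2 - 4)]
  obtain ⟨hX₁, hX₂⟩ := hX
  obtain ⟨hY₁, hY₂⟩ := hY
  obtain ⟨hT₁, hT₂⟩ := hT
  interval_cases T <;> interval_cases X <;> interval_cases Y <;> omega

theorem Int.sq_add_sq_add_pow_four_ne_twentytwo_mul_sixteen_pow (n : ℕ) (X Y T : ℤ) :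
    X ^ 2 + Y ^ 2 + T ^ 4 ≠ 22 * 16 ^ n := by
  induction n generalizing X Y T with
  | zero => simpa using Int.sq_add_sq_add_pow_four_ne_twentytwo X Y T
  | succ n ih =>
    intro h
    obtain ⟨x, y, t, h'⟩ :=
      Int.exists_sq_add_sq_add_pow_four_eq_of_eq_sixteen_mul (N := 22 * 16 ^ n) (by rw [h]; ring)
    exact ih x y t h'

theorem exists_eq_intCast_div_pow_of_le {K : Type*} [Field K] {q : ℤ} (hq : (q : K) ≠ 0)
    {x : K} {a : ℤ} {r m : ℕ} (hx : x = a / q ^ r) (hrm : r ≤ m) : ∃ b : ℤ, x = b / q ^ m := by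
  refine ⟨a * q ^ (m - r), ?_⟩
  rw [hx, div_eq_div_iff (pow_ne_zero _ hq) (pow_ne_zero _ hq)]
  push_cast
  rw [mul_assoc, ← pow_add, Nat.sub_add_cancel hrm]

/-- The equation `x² + y² + t⁴ = 22` has no solutions in `ℤ[1/2]`, i.e. among
rationals whose denominators are powers of `2`. -/
theorem no_two_integral_solutions_x2_y2_t4_eq_22 :
    ∀ x y t : ℚ,
      (∃ (a : ℤ) (r : ℕ), x = (a : ℚ) / 2 ^ r) →
      (∃ (a : ℤ) (r : ℕ), y = (a : ℚ) / 2 ^ r) →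
      (∃ (a : ℤ) (r : ℕ), t = (a : ℚ) / 2 ^ r) →
      x ^ 2 + y ^ 2 + t ^ 4 ≠ 22 := by
  rintro x y t ⟨a, r, hx⟩ ⟨b, s, hy⟩ ⟨c, u, ht⟩ h
  have h2 : ((2 : ℤ) : ℚ) ≠ 0 := by norm_num
  set n := r + s + u
  obtain ⟨X, rfl⟩ := exists_eq_intCast_div_pow_of_le h2 hx (by omega : r ≤ 2 * n)
  obtain ⟨Y, rfl⟩ := exists_eq_intCast_div_pow_of_le h2 hy (by omega : s ≤ 2 * n)
  obtain ⟨T, rfl⟩ := exists_eq_intCast_div_pow_of_le h2 ht (by omega : u ≤ n)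
  apply Int.sq_add_sq_add_pow_four_ne_twentytwo_mul_sixteen_pow n X Y T
  have hQ : (X : ℚ) ^ 2 + Y ^ 2 + T ^ 4 = 22 * 16 ^ n := by
    rw [← h, show (16 : ℚ) ^ n = 2 ^ (4 * n) by rw [pow_mul]; norm_num]
    field_simp
    ring
  exact_mod_cast hQ
end

section
/- Let n be odd and G = D_n the dihedral group of order 2n. Then H^i(G, ℤ) (trivial action) satisfies: H^0 = ℤ, H^i = 0 for i odd, H^i = ℤ/2 for i ≡ 2 (mod 4), and H^i = ℤ/2n for i > 0 with i ≡ 0 (mod 4). In particular H²(D_n, ℤ) ≅ ℤ/2ℤ for n odd. -/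
/-!
For a finite group `G` of order `N` and a 2-cocycle `f : G × G → ℤ` (trivial action), summing the
cocycle identity over the last variable shows `N • f = δ τ` with `τ g = ∑ h, f (g, h)`. Hence
`τ mod N` is a homomorphism `G → ℤ/N`; it vanishes exactly when `f` is a coboundary (divide by `N`),
and every homomorphism arises (lift it to `t : G → ℤ` and take the cocycle `δ t / N`). So
`H²(G, ℤ) ≅ Hom(G, ℤ/N)`.

For `D_n` with `n` odd, a homomorphism to an abelian group kills the rotations (conjugation inverts
them, so their images are 2-torsion as well as `n`-torsion) and takes one 2-torsion value on all
reflections. The 2-torsion of `ℤ/2n` is `{0, n} ≅ ℤ/2`.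
-/

namespace groupCohomology

section

universe u

variable {k G : Type u} {M : Type*} [CommRing k] [Group G] [AddCommGroup M] [Module k M] {A : Rep k G}

noncomputable def H2EquivOfSurjective (Φ : cocycles₂ A →ₗ[k] M) (hΦ : Function.Surjective Φ)
    (hker : ∀ x, Φ x = 0 ↔ ⇑x ∈ coboundaries₂ A) : H2 A ≃ₗ[k] M :=
  have hπ : Function.Surjective (H2π A).hom :=
    (ModuleCat.epi_iff_surjective _).1 inferInstance
  have hkers : LinearMap.ker (H2π A).hom = LinearMap.ker Φ := by
    ext x
    exact (H2π_eq_zero_iff x).trans (hker x).symm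
  ((H2π A).hom.quotKerEquivOfSurjective hπ).symm ≪≫ₗ Submodule.quotEquivOfEq _ _ hkers ≪≫ₗ
    Φ.quotKerEquivOfSurjective hΦ

end

variable {G : Type} [Group G]

lemma mem_cocycles₂_trivial_iff (f : G × G → ℤ) :
    f ∈ cocycles₂ (Rep.trivial ℤ G ℤ) ↔
      ∀ g h j : G, f (g * h, j) + f (g, h) = f (h, j) + f (g, h * j) := by
  simp [mem_cocycles₂_iff]

lemma mem_coboundaries₂_trivial_iff (f : G × G → ℤ) :
    f ∈ coboundaries₂ (Rep.trivial ℤ G ℤ) ↔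
      ∃ x : G → ℤ, ∀ g h : G, f (g, h) = x h - x (g * h) + x g := by
  simp [coboundaries₂, funext_iff, eq_comm]

variable [Fintype G]

def sumSnd (f : G × G → ℤ) (g : G) : ℤ := ∑ h, f (g, h)

lemma card_mul_eq_sumSnd (f : cocycles₂ (Rep.trivial ℤ G ℤ)) (g h : G) :
    Fintype.card G * f (g, h) = sumSnd f g + sumSnd f h - sumSnd f (g * h) := by
  have hsum := Finset.sum_congr rfl fun j (_ : j ∈ Finset.univ) =>
    (mem_cocycles₂_trivial_iff f).1 f.2 g h j
  have hshift : ∑ j, f (g, h * j) = sumSnd f g :=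
    Fintype.sum_equiv (Equiv.mulLeft h) _ _ fun _ => rfl
  simp only [Finset.sum_add_distrib, Finset.sum_const, Finset.card_univ, nsmul_eq_mul,
    hshift] at hsum
  simp only [sumSnd] at hsum ⊢
  linarith

lemma sumSnd_coboundary (x : G → ℤ) (g : G) :
    sumSnd (fun p => x p.2 - x (p.1 * p.2) + x p.1) g = Fintype.card G * x g := by
  have hshift : ∑ h, x (g * h) = ∑ h, x h :=
    Fintype.sum_equiv (Equiv.mulLeft g) _ _ fun _ => rfl
  simp [sumSnd, Finset.sum_add_distrib, Finset.sum_sub_distrib, hshift]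

def cocycleToHom (f : cocycles₂ (Rep.trivial ℤ G ℤ)) : Additive G →+ ZMod (Fintype.card G) :=
  AddMonoidHom.mk' (fun g => (sumSnd f g.toMul : ZMod _)) fun g h => by
    have hmul : sumSnd f (g.toMul * h.toMul) =
        sumSnd f g.toMul + sumSnd f h.toMul - Fintype.card G * f (g.toMul, h.toMul) := by
      linarith [card_mul_eq_sumSnd f g.toMul h.toMul]
    simp [hmul]

def cocyclesToHom : cocycles₂ (Rep.trivial ℤ G ℤ) →+ (Additive G →+ ZMod (Fintype.card G)) :=
  AddMonoidHom.mk' cocycleToHom fun f f' => by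
    refine AddMonoidHom.ext fun g => ?_
    simp only [cocycleToHom, AddMonoidHom.mk'_apply, AddMonoidHom.add_apply, sumSnd, ← Int.cast_add,
      ← Finset.sum_add_distrib]
    rfl

lemma cocycleToHom_eq_zero_iff (f : cocycles₂ (Rep.trivial ℤ G ℤ)) :
    cocycleToHom f = 0 ↔ ⇑f ∈ coboundaries₂ (Rep.trivial ℤ G ℤ) := by
  rw [mem_coboundaries₂_trivial_iff]
  constructor
  · intro hf
    have hN : (Fintype.card G : ℤ) ≠ 0 := by positivity
    have hdvd (g : G) : (Fintype.card G : ℤ) ∣ sumSnd f g :=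
      (ZMod.intCast_zmod_eq_zero_iff_dvd _ _).1 (DFunLike.congr_fun hf (.ofMul g))
    choose x hx using hdvd
    refine ⟨x, fun g h => mul_left_cancel₀ hN ?_⟩
    rw [card_mul_eq_sumSnd, hx, hx, hx]
    ring
  · rintro ⟨x, hx⟩
    ext g
    have hf : ⇑f = fun p => x p.2 - x (p.1 * p.2) + x p.1 := funext fun p => hx p.1 p.2
    simp [cocycleToHom, hf, sumSnd_coboundary]

lemma cocycleToHom_surjective : Function.Surjective (cocycleToHom (G := G)) := by
  intro φ
  have hN : (Fintype.card G : ℤ) ≠ 0 := by positivity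
  let t : G → ℤ := fun g => (φ (.ofMul g)).cast
  have ht (g h : G) : (Fintype.card G : ℤ) ∣ t g + t h - t (g * h) := by
    refine (ZMod.intCast_zmod_eq_zero_iff_dvd _ _).1 ?_
    simp [t, ofMul_mul]
  let F : G × G → ℤ := fun p => (t p.1 + t p.2 - t (p.1 * p.2)) / Fintype.card G
  have hF (g h : G) : Fintype.card G * F (g, h) = t g + t h - t (g * h) :=
    Int.mul_ediv_cancel' (ht g h)
  have hFcoc : F ∈ cocycles₂ (Rep.trivial ℤ G ℤ) := by
    refine (mem_cocycles₂_trivial_iff F).2 fun g h j => mul_left_cancel₀ hN ?_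
    rw [mul_add, mul_add, hF, hF, hF, hF, mul_assoc]
    ring
  have hsum (g : G) : sumSnd F g = t g := by
    refine mul_left_cancel₀ hN ?_
    rw [sumSnd, Finset.mul_sum, ← sumSnd_coboundary]
    exact Finset.sum_congr rfl fun h _ => by rw [hF]; ring
  refine ⟨⟨F, hFcoc⟩, AddMonoidHom.ext fun g => ?_⟩
  show ((sumSnd F g.toMul : ℤ) : ZMod _) = φ g
  rw [hsum]
  exact ZMod.intCast_zmod_cast _

noncomputable def H2TrivialIntEquiv :
    H2 (Rep.trivial ℤ G ℤ) ≃ₗ[ℤ] (Additive G →+ ZMod (Fintype.card G)) :=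
  H2EquivOfSurjective cocyclesToHom.toIntLinearMap cocycleToHom_surjective cocycleToHom_eq_zero_iff

end groupCohomology

namespace ZMod

lemma two_nsmul_natCast_eq_zero (n : ℕ) : 2 • (n : ZMod (2 * n)) = 0 := by
  rw [nsmul_eq_mul, ← Nat.cast_ofNat, ← Nat.cast_mul, natCast_self]

lemma eq_zero_of_two_nsmul_eq_zero_of_cast_eq_zero {n : ℕ} (hn : Odd n) {a : ZMod (2 * n)}
    (h2 : 2 • a = 0) (hcast : (a.cast : ZMod 2) = 0) : a = 0 := by
  have : NeZero (2 * n) := ⟨by positivity [hn.pos]⟩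
  have hn_dvd : n ∣ a.val := by
    refine Nat.dvd_of_mul_dvd_mul_left two_pos ((natCast_eq_zero_iff _ _).1 ?_)
    simpa [nsmul_eq_mul] using h2
  have htwo_dvd : 2 ∣ a.val := by
    rwa [cast_eq_val, natCast_eq_zero_iff] at hcast
  rw [← val_eq_zero]
  exact Nat.eq_zero_of_dvd_of_lt (hn.coprime_two_left.mul_dvd_of_dvd_of_dvd htwo_dvd hn_dvd)
    (val_lt a)

end ZMod

namespace DihedralGroup

variable {n : ℕ} {A : Type*} [AddCommGroup A]

lemma two_nsmul_map_sr (φ : Additive (DihedralGroup n) →+ A) (i : ZMod n) :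
    2 • φ (.ofMul (sr i)) = 0 := by
  rw [← map_nsmul, ← ofMul_pow, pow_two, sr_mul_self, ofMul_one, map_zero]

lemma map_r_eq_zero (hn : Odd n) (φ : Additive (DihedralGroup n) →+ A) (i : ZMod n) :
    φ (.ofMul (r i)) = 0 := by
  have hconj : r i * sr 0 = sr 0 * r (-i) := by rw [r_mul_sr, sr_mul_r, zero_sub, zero_add]
  have hsymm : φ (.ofMul (r i)) = φ (.ofMul (r (-i))) := by
    have h := congrArg (fun g => φ (.ofMul g)) hconj
    simp only [ofMul_mul, map_add] at h
    exact add_left_cancel ((add_comm _ _).trans h)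
  have h2 : 2 • φ (.ofMul (r i)) = 0 := by
    rw [two_nsmul]
    nth_rewrite 2 [hsymm]
    rw [← map_add, ← ofMul_mul, r_mul_r, add_neg_cancel, r_zero, ofMul_one, map_zero]
  have hn' : n • φ (.ofMul (r i)) = 0 := by
    rw [← map_nsmul, ← ofMul_pow, r_pow, ZMod.natCast_self, mul_zero, r_zero, ofMul_one, map_zero]
  generalize φ (.ofMul (r i)) = x at h2 hn' ⊢
  obtain ⟨k, hk⟩ := hn
  rwa [hk, add_nsmul, mul_nsmul, h2, nsmul_zero, zero_add, one_nsmul] at hn'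

lemma map_sr (hn : Odd n) (φ : Additive (DihedralGroup n) →+ A) (i : ZMod n) :
    φ (.ofMul (sr i)) = φ (.ofMul (sr 0)) := by
  rw [← zero_add i, ← sr_mul_r, ofMul_mul, map_add, map_r_eq_zero hn, add_zero]

lemma addMonoidHom_ext (hn : Odd n) {φ ψ : Additive (DihedralGroup n) →+ A}
    (h : φ (.ofMul (sr 0)) = ψ (.ofMul (sr 0))) : φ = ψ := by
  refine AddMonoidHom.ext (Additive.ofMul.surjective.forall.2 fun g => ?_)
  cases g with
  | r i => rw [map_r_eq_zero hn, map_r_eq_zero hn]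
  | sr i => rw [map_sr hn, map_sr hn ψ, h]

def reflectionHom (a : A) (ha : 2 • a = 0) : Additive (DihedralGroup n) →+ A where
  toFun g := match g.toMul with
    | r _ => 0
    | sr _ => a
  map_zero' := rfl
  map_add' := Additive.ofMul.surjective.forall₂.2 fun g h => by
    cases g <;> cases h <;> simp [r_mul_r, r_mul_sr, sr_mul_r, sr_mul_sr, ← two_nsmul, ha]

@[simp]
lemma reflectionHom_sr (a : A) (ha : 2 • a = 0) (i : ZMod n) :
    reflectionHom a ha (.ofMul (sr i)) = a := rfl

noncomputable def addMonoidHomZModEquiv (hn : Odd n) :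
    (Additive (DihedralGroup n) →+ ZMod (2 * n)) ≃+ ZMod 2 :=
  AddEquiv.ofBijective ((ZMod.castHom (dvd_mul_right 2 n) (ZMod 2)).toAddMonoidHom.comp
      (AddMonoidHom.eval (.ofMul (sr 0)))) <| by
    refine ⟨(injective_iff_map_eq_zero _).2 fun φ hφ => addMonoidHom_ext hn ?_, fun z => ?_⟩
    · exact ZMod.eq_zero_of_two_nsmul_eq_zero_of_cast_eq_zero hn (two_nsmul_map_sr φ 0) hφ
    · obtain rfl | rfl : z = 0 ∨ z = 1 := (by decide : ∀ z : ZMod 2, z = 0 ∨ z = 1) z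
      · exact ⟨0, map_zero _⟩
      · refine ⟨reflectionHom n (ZMod.two_nsmul_natCast_eq_zero n), ?_⟩
        simpa using ZMod.natCast_eq_one_iff_odd.2 hn

end DihedralGroup

/-- For `n` odd, the dihedral group `D_n` of order `2n` acting trivially on `ℤ`
satisfies `H²(D_n, ℤ) ≅ ℤ/2ℤ`. -/
theorem h2_dihedral_odd_int (n : ℕ) (hodd : Odd n) :
    Nonempty
      ((groupCohomology (Rep.trivial ℤ (DihedralGroup n) ℤ) 2) ≃ₗ[ℤ] ZMod 2) := by
  have : NeZero n := ⟨hodd.pos.ne'⟩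
  have e := groupCohomology.H2TrivialIntEquiv (G := DihedralGroup n)
  rw [DihedralGroup.card] at e
  exact ⟨e.trans (DihedralGroup.addMonoidHomZModEquiv hodd).toIntLinearEquiv⟩
end

section
/- Let K be an algebraically closed field of characteristic zero, P(t) = c(t−e₁)⋯(t−e_n) a separable polynomial with c ≠ 0, and X ⊂ 𝔸³_K the affine surface defined by u₁u₂ = P(t). Then every invertible regular function on X is constant: O(X)* = K*. -/
/-!
Write `A = K[u₁, u₂, t] / (u₁u₂ - p(t))`. The parametrisation `u₁ = T`, `u₂ = p(t) T⁻¹` maps `A`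
into the Laurent polynomial ring `K[t][T, T⁻¹]`, and the map is injective: for the grading
`deg u₁ = 1`, `deg u₂ = -1`, `deg t = 0`, the equation `u₁u₂ = p(t)` turns every homogeneous
element of degree `d` into `u₁ᵈ q(t)` or `u₂⁻ᵈ q(t)`, whose image `p(t)^max(0,-d) q(t) Tᵈ`
vanishes only when `q = 0` (for `p ≠ 0`). The units of `K[t][T, T⁻¹]` are the monomials `c Tᵐ`
with `c ∈ K*`, so a unit `r` of `A` satisfies `r u₁^max(0,-m) = c u₁^max(0,m)`. On the points
`u₁ = u₂ = p(t) = 0`, which exist as `p` is not constant, `u₁` vanishes while `r` and `c` do not;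
hence `m = 0` and `r = c`.
-/

open MvPolynomial

open scoped Polynomial LaurentPolynomial

open LaurentPolynomial (T)

theorem LaurentPolynomial.exists_C_mul_T_of_isUnit {R : Type*} [CommRing R] [IsDomain R]
    {f : R[T;T⁻¹]} (hf : IsUnit f) : ∃ (u : R) (m : ℤ), IsUnit u ∧ f = C u * T m := by
  obtain ⟨g, hfg⟩ := hf.exists_right_inv
  obtain ⟨n, F, hF⟩ := exists_T_pow f
  obtain ⟨n', G, hG⟩ := exists_T_pow g
  have hFG : F * G = Polynomial.X ^ (n + n') := by
    apply Polynomial.toLaurent_injective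
    rw [map_mul, hF, hG, Polynomial.toLaurent_X_pow, mul_mul_mul_comm, hfg, one_mul, ← T_add]
    push_cast; rfl
  obtain ⟨i, -, hi⟩ := (dvd_prime_pow Polynomial.prime_X _).1 ⟨G, hFG.symm⟩
  obtain ⟨v, hv⟩ := hi.symm
  obtain ⟨u, hu, hCu⟩ := Polynomial.isUnit_iff.1 v.isUnit
  refine ⟨u, i - n, hu, ?_⟩
  have hf : f = Polynomial.toLaurent F * T (-n) := by
    rw [hF, mul_T_assoc, add_neg_cancel, T_zero, mul_one]
  rw [hf, ← hv, ← hCu, map_mul, Polynomial.toLaurent_C, Polynomial.toLaurent_X_pow, mul_comm (T _),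
    mul_assoc, ← T_add, sub_eq_add_neg]

theorem LaurentPolynomial.coeff_C_mul_T {R : Type*} [Semiring R] (a : R) (m n : ℤ) :
    (LaurentPolynomial.C a * T m).coeff n = if m = n then a else 0 := by
  rw [← LaurentPolynomial.single_eq_C_mul_T, AddMonoidAlgebra.coeff_single, Finsupp.single_apply]

noncomputable section

namespace Chatelet

variable {K : Type*} [CommRing K] (p : K[X])

/-- `X 0`, `X 1`, `X 2` play the roles of `u₁`, `u₂`, `t`; `param` sends the part of degree `d`
to multiples of `T ^ d`. -/
abbrev grading : Fin 3 → ℤ := ![1, -1, 0]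

def ideal : Ideal (MvPolynomial (Fin 3) K) :=
  Ideal.span {X 0 * X 1 - Polynomial.aeval (X 2) p}

abbrev CoordRing := MvPolynomial (Fin 3) K ⧸ ideal p

def param : MvPolynomial (Fin 3) K →ₐ[K] K[X][T;T⁻¹] :=
  aeval ![T 1, LaurentPolynomial.C p * T (-1), LaurentPolynomial.C Polynomial.X]

@[simp] lemma param_X_zero : param p (X 0) = T 1 := by simp [param]
@[simp] lemma param_X_one : param p (X 1) = LaurentPolynomial.C p * T (-1) := by simp [param]
@[simp] lemma param_aeval_X_two (q : K[X]) :
    param p (Polynomial.aeval (X 2) q) = LaurentPolynomial.C q := by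
  rw [← Polynomial.aeval_algHom_apply]
  have : param p (X 2) = algebraMap K[X] K[X][T;T⁻¹] Polynomial.X := by simp [param]
  rw [this, Polynomial.aeval_algebraMap_apply, Polynomial.aeval_X_left_apply]; rfl

lemma param_X_zero_mul_X_one : param p (X 0 * X 1) = LaurentPolynomial.C p := by
  rw [map_mul, param_X_zero, param_X_one, mul_left_comm, ← LaurentPolynomial.T_add]
  simp

def embedding : CoordRing p →ₐ[K] K[X][T;T⁻¹] :=
  Ideal.Quotient.liftₐ _ (param p) fun a ha => by
    obtain ⟨b, rfl⟩ := Ideal.mem_span_singleton'.1 ha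
    rw [map_mul, map_sub, param_X_zero_mul_X_one, param_aeval_X_two, sub_self, mul_zero]

@[simp] lemma embedding_mk (f : MvPolynomial (Fin 3) K) :
    embedding p (Ideal.Quotient.mk _ f) = param p f := rfl

lemma mk_X_zero_mul_X_one :
    Ideal.Quotient.mk (ideal p) (X 0 * X 1) =
      Ideal.Quotient.mk (ideal p) (Polynomial.aeval (X 2) p) :=
  Ideal.Quotient.eq.2 (Ideal.subset_span rfl)

lemma weight_grading (m : Fin 3 →₀ ℕ) : Finsupp.weight grading m = (m 0 : ℤ) - m 1 := by
  simp [Finsupp.weight_apply, Finsupp.sum_fintype, Fin.sum_univ_three, sub_eq_add_neg]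

lemma exists_mk_eq_of_isWeightedHomogeneous {g : MvPolynomial (Fin 3) K} {d : ℤ}
    (hg : IsWeightedHomogeneous grading g d) :
    ∃ q : K[X], Ideal.Quotient.mk (ideal p) g = Ideal.Quotient.mk (ideal p)
      (X 0 ^ d.toNat * X 1 ^ (-d).toNat * Polynomial.aeval (X 2) q) := by
  induction hg using IsWeightedHomogeneous.induction_on with
  | zero => exact ⟨0, by simp⟩
  | add g g' _ _ ih ih' =>
    obtain ⟨q, hq⟩ := ih
    obtain ⟨q', hq'⟩ := ih'
    exact ⟨q + q', by rw [map_add, hq, hq', ← map_add, map_add (Polynomial.aeval _), mul_add]⟩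
  | monomial m k hm =>
    set j := min (m 0) (m 1)
    refine ⟨Polynomial.C k * Polynomial.X ^ m 2 * p ^ j, ?_⟩
    rw [weight_grading] at hm
    have hm' : monomial m k =
        X 0 ^ d.toNat * X 1 ^ (-d).toNat * (C k * X 2 ^ m 2) * (X 0 * X 1) ^ j := by
      rw [monomial_eq, Finsupp.prod_pow, Fin.prod_univ_three,
        show m 0 = d.toNat + j by omega, show m 1 = (-d).toNat + j by omega]
      ring
    rw [hm', map_mul _ _ ((X 0 * X 1) ^ j), map_pow, mk_X_zero_mul_X_one, ← map_pow, ← map_mul]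
    congr 1
    simp only [map_mul, map_pow, Polynomial.aeval_C, Polynomial.aeval_X, algebraMap_eq]
    ring

lemma param_X_zero_pow_mul_X_one_pow_mul_aeval (a b : ℕ) (q : K[X]) :
    param p (X 0 ^ a * X 1 ^ b * Polynomial.aeval (X 2) q) =
      LaurentPolynomial.C (p ^ b * q) * T (a - b) := by
  simp only [map_mul, map_pow, param_X_zero, param_X_one, param_aeval_X_two, mul_pow,
    LaurentPolynomial.T_pow, LaurentPolynomial.T_sub]
  ring_nf

lemma coeff_param_weightedHomogeneousComponent (f : MvPolynomial (Fin 3) K) (d : ℤ) :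
    (param p (weightedHomogeneousComponent grading d f)).coeff d = (param p f).coeff d := by
  conv_rhs => rw [← sum_weightedHomogeneousComponent grading f,
    finsum_eq_sum _ (weightedHomogeneousComponent_finsupp f), map_sum, AddMonoidAlgebra.coeff_sum,
    Finsupp.finsetSum_apply]
  rw [Finset.sum_eq_single d]
  · intro e _ hed
    obtain ⟨q, hq⟩ := exists_mk_eq_of_isWeightedHomogeneous p
      (weightedHomogeneousComponent_isWeightedHomogeneous (w := grading) e f)
    rw [← embedding_mk, hq, embedding_mk, param_X_zero_pow_mul_X_one_pow_mul_aeval,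
      Int.toNat_sub_toNat_neg, LaurentPolynomial.coeff_C_mul_T, if_neg hed]
  · intro hd
    rw [show weightedHomogeneousComponent grading d f = 0 from
      not_not.1 fun h => hd ((Set.Finite.mem_toFinset _).2 h), map_zero]
    rfl

lemma not_isUnit_mk_X_zero (hp : ¬IsUnit p) : ¬IsUnit (Ideal.Quotient.mk (ideal p) (X 0)) := by
  let ε : MvPolynomial (Fin 3) K →ₐ[K] K[X] ⧸ Ideal.span {p} :=
    aeval ![0, 0, algebraMap K[X] _ Polynomial.X]
  have hε : ∀ a ∈ ideal p, ε a = 0 := fun a ha => by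
    obtain ⟨b, rfl⟩ := Ideal.mem_span_singleton'.1 ha
    have hX2 : ε (X 2) = algebraMap K[X] _ Polynomial.X := aeval_X _ 2
    rw [map_mul, map_sub, ← Polynomial.aeval_algHom_apply, hX2, Polynomial.aeval_algebraMap_apply,
      Polynomial.aeval_X_left_apply, Ideal.Quotient.algebraMap_eq, Ideal.Quotient.mk_singleton_self]
    simp [ε]
  have : Nontrivial (K[X] ⧸ Ideal.span {p}) :=
    Ideal.Quotient.nontrivial_iff.2 (mt Ideal.span_singleton_eq_top.1 hp)
  intro hX
  have : IsUnit (ε (X 0)) := hX.map (Ideal.Quotient.liftₐ _ ε hε)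
  simp [ε] at this

variable [IsDomain K]

theorem injective_embedding (hp : p ≠ 0) : Function.Injective (embedding p) := by
  refine (injective_iff_map_eq_zero _).2 fun r hr => ?_
  obtain ⟨f, rfl⟩ := Ideal.Quotient.mk_surjective r
  rw [← sum_weightedHomogeneousComponent grading f,
    finsum_eq_sum _ (weightedHomogeneousComponent_finsupp f), map_sum]
  refine Finset.sum_eq_zero fun d _ => ?_
  obtain ⟨q, hq⟩ := exists_mk_eq_of_isWeightedHomogeneous p
    (weightedHomogeneousComponent_isWeightedHomogeneous (w := grading) d f)
  have hpq : p ^ (-d).toNat * q = 0 := by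
    have := coeff_param_weightedHomogeneousComponent p f d
    rwa [← embedding_mk, hq, embedding_mk, param_X_zero_pow_mul_X_one_pow_mul_aeval,
      Int.toNat_sub_toNat_neg, ← embedding_mk, hr, LaurentPolynomial.coeff_C_mul_T,
      if_pos rfl] at this
  rw [hq, (mul_eq_zero.1 hpq).resolve_left (pow_ne_zero _ hp), map_zero, mul_zero, map_zero]

theorem exists_eq_algebraMap_of_isUnit (hp₀ : p ≠ 0) (hp : ¬IsUnit p) {r : CoordRing p}
    (hr : IsUnit r) : ∃ a : K, IsUnit a ∧ r = algebraMap K (CoordRing p) a := by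
  obtain ⟨u, m, hu, hrm⟩ := LaurentPolynomial.exists_C_mul_T_of_isUnit (hr.map (embedding p))
  obtain ⟨a, ha, rfl⟩ := Polynomial.isUnit_iff.1 hu
  set x := Ideal.Quotient.mk (ideal p) (X 0)
  have key : r * x ^ (-m).toNat = algebraMap K _ a * x ^ m.toNat := by
    apply injective_embedding p hp₀
    rw [map_mul, map_mul, map_pow, map_pow, hrm, AlgHom.commutes, embedding_mk, param_X_zero,
      LaurentPolynomial.T_pow, LaurentPolynomial.T_pow, mul_assoc, ← LaurentPolynomial.T_add]
    exact congrArg₂ (· * ·) rfl (congrArg T (by omega))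
  have hm : m = 0 := by
    by_contra hm
    apply not_isUnit_mk_X_zero p hp
    rcases lt_or_gt_of_ne hm with hm | hm
    · rw [Int.toNat_of_nonpos hm.le, pow_zero, mul_one] at key
      exact (isUnit_pow_iff (by omega)).1 (isUnit_of_mul_isUnit_right (key ▸ ha.map _))
    · rw [Int.toNat_of_nonpos (by omega : -m ≤ 0), pow_zero, mul_one] at key
      exact (isUnit_pow_iff (by omega)).1 (isUnit_of_mul_isUnit_right (key ▸ hr))
  exact ⟨a, ha, by simpa [hm] using key⟩

end Chatelet

end

theorem units_of_affine_chatelet_are_constant_general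
    (K : Type) [Field K]
    (n : ℕ) (hn : 0 < n) (c : K) (hc : c ≠ 0)
    (e : Fin n → K)
    (P : MvPolynomial (Fin 3) K)
    (hP : P = C c * ∏ j : Fin n, (X 2 - C (e j)))
    (I : Ideal (MvPolynomial (Fin 3) K))
    (hI : I = Ideal.span {X 0 * X 1 - P}) :
    ∀ r : MvPolynomial (Fin 3) K ⧸ I, IsUnit r →
      ∃ a : K, a ≠ 0 ∧ r = algebraMap K (MvPolynomial (Fin 3) K ⧸ I) a := by
  intro r hr
  set p : K[X] := Polynomial.C c * ∏ j, (Polynomial.X - Polynomial.C (e j))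
  have hIp : I = Chatelet.ideal p := by simp [hI, hP, Chatelet.ideal, p]
  subst hIp
  have hp₀ : p ≠ 0 := mul_ne_zero (Polynomial.C_ne_zero.2 hc)
    (Finset.prod_ne_zero_iff.2 fun j _ => Polynomial.X_sub_C_ne_zero (e j))
  have hp : ¬IsUnit p := fun h => by
    have := Polynomial.natDegree_eq_zero_of_isUnit h
    rw [Polynomial.natDegree_C_mul hc, Polynomial.natDegree_finsetProd_X_sub_C_eq_card] at this
    simp only [Finset.card_univ, Fintype.card_fin] at this
    omega
  obtain ⟨a, ha, rfl⟩ := Chatelet.exists_eq_algebraMap_of_isUnit p hp₀ hp hr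
  exact ⟨a, ha.ne_zero, rfl⟩

/-- Let `K` be an algebraically closed field of characteristic zero and
`P(t) = c(t - e₁)⋯(t - e_n)` a separable polynomial with `c ≠ 0` (and `n ≥ 1`).
Every invertible regular function on the affine surface `X : u₁u₂ = P(t)` is a
nonzero constant: `O(X)* = K*`. -/
theorem units_of_affine_chatelet_are_constant
    (K : Type) [Field K] [IsAlgClosed K] [CharZero K]
    (n : ℕ) (hn : 0 < n) (c : K) (hc : c ≠ 0)
    (e : Fin n → K) (he : Function.Injective e)
    (P : MvPolynomial (Fin 3) K)
    (hP : P = C c * ∏ j : Fin n, (X 2 - C (e j)))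
    (I : Ideal (MvPolynomial (Fin 3) K))
    (hI : I = Ideal.span {X 0 * X 1 - P}) :
    ∀ r : MvPolynomial (Fin 3) K ⧸ I, IsUnit r →
      ∃ a : K, a ≠ 0 ∧ r = algebraMap K (MvPolynomial (Fin 3) K ⧸ I) a :=
  units_of_affine_chatelet_are_constant_general K n hn c hc e P hP I hI
end

section
/- Let M = ℤ³ with the action of D₄ = ⟨g, h⟩ where g acts by the matrix [[0,0,1],[−1,−1,−1],[0,1,0]] and h by [[−1,0,0],[0,−1,0],[1,1,1]] (columns give images of basis vectors). Then g⁴ = h² = (gh)² = 1 on M, and H¹(D₄, M) ≅ ℤ/4ℤ. -/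
open Matrix

/-! Since `N_g = 0`, the cocycle conditions cut out the rank-3 lattice
`Z = {(v, v') : v'₂ = 0, v₁ = v'₁, v'₀ = v₀ - v₂}`. On `Z` the coboundaries are exactly the
pairs with `4 ∣ v₀ + v₁ + v₂`: the coordinate sum of `Δ_g w` is `4 w₁`, and conversely
`w = (v₀ - k, k, v₀ + v₂ - 2k)` realises any cocycle with coordinate sum `4k` as a coboundary.
Hence `(v, v') ↦ v₀ + v₁ + v₂ mod 4` identifies `H¹` with `ℤ/4ℤ`. -/

theorem Submodule.nonempty_quotient_comap_subtype_linearEquiv {R M A : Type*} [Ring R]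
    [AddCommGroup M] [Module R M] [AddCommGroup A] [Module R A] {Z B : Submodule R M}
    (φ : M →ₗ[R] A) (hB : ∀ z ∈ Z, z ∈ B ↔ φ z = 0) (hφ : ∀ a, ∃ z ∈ Z, φ z = a) :
    Nonempty ((Z ⧸ B.comap Z.subtype) ≃ₗ[R] A) := by
  have hker : B.comap Z.subtype = LinearMap.ker (φ ∘ₗ Z.subtype) := by
    ext z
    exact hB z z.2
  have hsurj : Function.Surjective (φ ∘ₗ Z.subtype) := fun a => by
    obtain ⟨z, hz, rfl⟩ := hφ a
    exact ⟨⟨z, hz⟩, rfl⟩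
  exact ⟨(Submodule.quotEquivOfEq _ _ hker).trans
    ((φ ∘ₗ Z.subtype).quotKerEquivOfSurjective hsurj)⟩

namespace PicardD4

def g : Matrix (Fin 3) (Fin 3) ℤ := !![0, 0, 1; -1, -1, -1; 0, 1, 0]

def h : Matrix (Fin 3) (Fin 3) ℤ := !![-1, 0, 0; 0, -1, 0; 1, 1, 1]

theorem g_pow_four : g ^ 4 = 1 := by decide

theorem h_sq : h ^ 2 = 1 := by decide

theorem g_mul_h_sq : (g * h) ^ 2 = 1 := by decide

theorem norm_g : 1 + gᵀ + gᵀ ^ 2 + gᵀ ^ 3 = 0 := by decide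

theorem norm_h : 1 + hᵀ = !![0, 0, 1; 0, 0, 1; 0, 0, 2] := by decide

theorem norm_gh : 1 + gᵀ * hᵀ = !![1, 1, -1; 0, 2, 0; -1, 1, 1] := by decide

theorem delta_g : 1 - gᵀ = !![1, 1, 0; 0, 2, -1; -1, 1, 1] := by decide

theorem delta_h : 1 - hᵀ = !![2, 0, -1; 0, 2, -1; 0, 0, 0] := by decide

abbrev V := Fin 3 → ℤ

def d1 : V →ₗ[ℤ] V × V := LinearMap.prod (1 - gᵀ).mulVecLin (1 - hᵀ).mulVecLin

def d2 : V × V →ₗ[ℤ] V × V × V :=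
  LinearMap.prod ((1 + gᵀ + gᵀ ^ 2 + gᵀ ^ 3).mulVecLin ∘ₗ LinearMap.fst ℤ _ _)
    (LinearMap.prod ((1 + hᵀ).mulVecLin ∘ₗ LinearMap.snd ℤ _ _)
      ((1 + gᵀ * hᵀ).mulVecLin ∘ₗ LinearMap.fst ℤ _ _ -
        (1 + gᵀ * hᵀ).mulVecLin ∘ₗ LinearMap.snd ℤ _ _))

theorem d1_apply (w : V) :
    d1 w = (![w 0 + w 1, 2 * w 1 - w 2, -w 0 + w 1 + w 2],
      ![2 * w 0 - w 2, 2 * w 1 - w 2, 0]) := by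
  ext i <;> fin_cases i <;>
    simp [d1, delta_g, delta_h, dotProduct, Fin.sum_univ_three] <;> ring

theorem d2_apply (p : V × V) :
    d2 p = (0, ![p.2 2, p.2 2, 2 * p.2 2],
      ![p.1 0 - p.2 0 + (p.1 1 - p.2 1) - (p.1 2 - p.2 2), 2 * (p.1 1 - p.2 1),
        -(p.1 0 - p.2 0) + (p.1 1 - p.2 1) + (p.1 2 - p.2 2)]) := by
  ext i <;> fin_cases i <;>
    simp [d2, norm_g, norm_h, norm_gh, dotProduct, Fin.sum_univ_three] <;> ring

theorem mem_ker_d2 {p : V × V} :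
    p ∈ LinearMap.ker d2 ↔ p.2 2 = 0 ∧ p.1 1 = p.2 1 ∧ p.2 0 = p.1 0 - p.1 2 := by
  simp only [LinearMap.mem_ker, d2_apply, Prod.ext_iff, funext_iff, Fin.forall_fin_succ,
    IsEmpty.forall_iff, and_true, true_and, Prod.fst_zero, Prod.snd_zero, Pi.zero_apply,
    cons_val_zero, cons_val_succ]
  omega

theorem mem_range_d1_iff {p : V × V} (hp : p ∈ LinearMap.ker d2) :
    p ∈ LinearMap.range d1 ↔ 4 ∣ p.1 0 + p.1 1 + p.1 2 := by
  constructor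
  · rintro ⟨w, rfl⟩
    exact ⟨w 1, by simp only [d1_apply, cons_val]; ring⟩
  · rintro ⟨k, hk⟩
    obtain ⟨hv'2, hv1, hv'0⟩ := mem_ker_d2.mp hp
    refine ⟨![p.1 0 - k, k, p.1 0 + p.1 2 - 2 * k], ?_⟩
    rw [d1_apply]
    ext i <;> fin_cases i <;> simp <;> omega

def coordSumMod4 : V × V →ₗ[ℤ] ZMod 4 :=
  (Int.castAddHom (ZMod 4)).toIntLinearMap ∘ₗ
    (LinearMap.proj (R := ℤ) (φ := fun _ : Fin 3 => ℤ) 0 + LinearMap.proj 1 + LinearMap.proj 2) ∘ₗ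
      LinearMap.fst ℤ V V

theorem coordSumMod4_apply (p : V × V) :
    coordSumMod4 p = ((p.1 0 + p.1 1 + p.1 2 : ℤ) : ZMod 4) :=
  rfl

theorem nonempty_h1_linearEquiv_zmod_four :
    Nonempty ((LinearMap.ker d2 ⧸ (LinearMap.range d1).comap (LinearMap.ker d2).subtype)
      ≃ₗ[ℤ] ZMod 4) := by
  refine Submodule.nonempty_quotient_comap_subtype_linearEquiv coordSumMod4 (fun p hp => ?_)
    (fun a => ?_)
  · rw [mem_range_d1_iff hp, coordSumMod4_apply, ZMod.intCast_zmod_eq_zero_iff_dvd]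
    norm_cast
  · obtain ⟨n, rfl⟩ := ZMod.intCast_surjective a
    refine ⟨n • (![0, 1, 0], ![0, 1, 0]), mem_ker_d2.mpr ?_, ?_⟩
    · simp
    · simp [coordSumMod4_apply]

end PicardD4

/-- Let `M = ℤ³` with the `D₄ = ⟨g,h⟩`-action in which `g` acts through the matrix
`[[0,0,1],[-1,-1,-1],[0,1,0]]` and `h` through `[[-1,0,0],[0,-1,0],[1,1,1]]`
(the matrices act on row vectors, i.e. through their transposes on column
vectors).  Then `g⁴ = h² = (gh)² = 1` on `M`, and `H¹(D₄, M) ≅ ℤ/4ℤ`, where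
`H¹` is computed via the efficient resolution: it is the group of pairs
`(v, v')` with `N_g v = 0`, `N_h v' = 0`, `N_{gh} v = N_{gh} v'`, modulo the
pairs `(Δ_g w, Δ_h w)`. -/
theorem h1_d4_picard_lattice_x_m
    (Mg Mh : Matrix (Fin 3) (Fin 3) ℤ)
    (hMg : Mg = !![0, 0, 1; -1, -1, -1; 0, 1, 0])
    (hMh : Mh = !![-1, 0, 0; 0, -1, 0; 1, 1, 1])
    (Ng Nh Ngh Dg Dh : Matrix (Fin 3) (Fin 3) ℤ)
    (hNg : Ng = 1 + Mgᵀ + Mgᵀ ^ 2 + Mgᵀ ^ 3)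
    (hNh : Nh = 1 + Mhᵀ)
    (hNgh : Ngh = 1 + Mgᵀ * Mhᵀ)
    (hDg : Dg = 1 - Mgᵀ) (hDh : Dh = 1 - Mhᵀ)
    (d1 : (Fin 3 → ℤ) →ₗ[ℤ] (Fin 3 → ℤ) × (Fin 3 → ℤ))
    (hd1 : d1 = LinearMap.prod Dg.mulVecLin Dh.mulVecLin)
    (d2 : ((Fin 3 → ℤ) × (Fin 3 → ℤ)) →ₗ[ℤ]
      ((Fin 3 → ℤ) × ((Fin 3 → ℤ) × (Fin 3 → ℤ))))
    (hd2 : d2 = LinearMap.prod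
      (Ng.mulVecLin ∘ₗ LinearMap.fst ℤ _ _)
      (LinearMap.prod (Nh.mulVecLin ∘ₗ LinearMap.snd ℤ _ _)
        (Ngh.mulVecLin ∘ₗ LinearMap.fst ℤ _ _ -
          Ngh.mulVecLin ∘ₗ LinearMap.snd ℤ _ _))) :
    (Mg ^ 4 = 1 ∧ Mh ^ 2 = 1 ∧ (Mg * Mh) ^ 2 = 1) ∧
      Nonempty
        ((LinearMap.ker d2 ⧸
            Submodule.comap (LinearMap.ker d2).subtype (LinearMap.range d1))
          ≃ₗ[ℤ] ZMod 4) := by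
  subst hMg hMh hNg hNh hNgh hDg hDh hd1 hd2
  exact ⟨⟨PicardD4.g_pow_four, PicardD4.h_sq, PicardD4.g_mul_h_sq⟩,
    PicardD4.nonempty_h1_linearEquiv_zmod_four⟩
end
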